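/- arXiv:math-ph/0210010 — 3 statements merged into one kernel-verified Lean document; each statement's English description precedes it below -/
import Mathlib

section
/- Let μ be a finite measure on ℝ with all moments finite, and let (π_k) be the monic orthogonal polynomials with respect to μ, with ∫ π_k π_m dμ = c_k² δ_{km}, c_k > 0. For ε ∈ ℂ \ ℝ define the Cauchy transform h_k(ε) = (1/(2πi)) ∫ π_k(x)/(x - ε) dμ(x). Then for every n ≥ 1 and every z ∈ ℂ \ ℝ, the determinant of the 2×2 matrix [[π_n(z), h_n(z)], [γ_{n-1} π_{n-1}(z), γ_{n-1} h_{n-1}(z)]] equals 1, where γ_{n-1} = -2πi/c_{n-1}². -/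
/-!
Write `q_k = π_k /ₘ (X - z)`, so that `π_k(x) = (x - z) q_k(x) + π_k(z)`. Then
`π_n(z) π_{n-1}(x) - π_{n-1}(z) π_n(x) = (x - z) (π_n(x) q_{n-1}(x) - π_{n-1}(x) q_n(x))`, hence
`π_n(z) h_{n-1}(z) - π_{n-1}(z) h_n(z) = (2πi)⁻¹ ∫ (π_n q_{n-1} - π_{n-1} q_n) dμ`.
Since `q_{n-1}` has degree `< n` and `q_n` is monic of degree `n - 1`, orthogonality makes this
`(2πi)⁻¹ (0 - c_{n-1}²)`, and multiplying by `γ_{n-1}` gives `1`.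
-/

open MeasureTheory Polynomial Complex

namespace Polynomial

theorem eval_eq_sub_mul_eval_divByMonic_add {R : Type*} [CommRing R] (P : R[X]) (z w : R) :
    P.eval w = (w - z) * (P /ₘ (X - C z)).eval w + P.eval z := by
  conv_lhs => rw [← modByMonic_add_div P (X - C z), modByMonic_X_sub_C_eq_C_eval]
  simp only [eval_add, eval_mul, eval_sub, eval_X, eval_C]
  ring

theorem eval_mul_div_sub_sub_eval_mul_div_sub {K : Type*} [Field K] (P Q : K[X]) {z w : K}
    (hwz : w - z ≠ 0) :
    P.eval z * (Q.eval w / (w - z)) - Q.eval z * (P.eval w / (w - z)) =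
      P.eval w * (Q /ₘ (X - C z)).eval w - Q.eval w * (P /ₘ (X - C z)).eval w := by
  rw [P.eval_eq_sub_mul_eval_divByMonic_add z w, Q.eval_eq_sub_mul_eval_divByMonic_add z w]
  field_simp
  ring

theorem Monic.divByMonic_X_sub_C {R : Type*} [CommRing R] [Nontrivial R] {P : R[X]}
    (hP : P.Monic) (hdeg : 0 < P.natDegree) (z : R) : (P /ₘ (X - C z)).Monic := by
  refine (leadingCoeff_divByMonic_of_monic (monic_X_sub_C z) ?_).trans hP.leadingCoeff
  rw [degree_X_sub_C, degree_eq_natDegree hP.ne_zero]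
  exact_mod_cast hdeg

section LinearFunctional

variable {R M : Type*} [Ring R] [Nontrivial R] [AddCommGroup M] [Module R M] {P : ℕ → R[X]}
  (L : R[X] →ₗ[R] M) {m : ℕ}

theorem linearMap_eq_zero_of_degree_lt (hP : ∀ i, (P i).Monic) (hdeg : ∀ i, (P i).natDegree = i)
    (hL : ∀ i < m, L (P i) = 0) {Q : R[X]} (hQ : Q.degree < m) : L Q = 0 := by
  let S : Sequence R := ⟨P, fun i => by rw [degree_eq_natDegree (hP i).ne_zero, hdeg]⟩
  have hspan : Q ∈ Submodule.span R (S '' Set.Iio m) := by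
    rw [S.span_degreeLT fun i _ => by simp [S, (hP i).leadingCoeff]]
    exact mem_degreeLT.mpr hQ
  have hker : Submodule.span R (S '' Set.Iio m) ≤ LinearMap.ker L := by
    rw [Submodule.span_le]
    rintro _ ⟨i, hi, rfl⟩
    exact hL i hi
  exact hker hspan

theorem linearMap_eq_of_monic (hP : ∀ i, (P i).Monic) (hdeg : ∀ i, (P i).natDegree = i)
    (hL : ∀ i < m, L (P i) = 0) {Q : R[X]} (hQ : Q.Monic) (hQdeg : Q.natDegree = m) :
    L Q = L (P m) := by
  have hdeg_eq : Q.degree = (P m).degree := by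
    rw [degree_eq_natDegree hQ.ne_zero, degree_eq_natDegree (hP m).ne_zero, hQdeg, hdeg]
  have hlt := degree_sub_lt_left hdeg_eq hQ.ne_zero (by rw [hQ.leadingCoeff, (hP m).leadingCoeff])
  rw [degree_eq_natDegree hQ.ne_zero, hQdeg] at hlt
  rw [← sub_eq_zero, ← map_sub]
  exact linearMap_eq_zero_of_degree_lt L hP hdeg hL hlt

end LinearFunctional

end Polynomial

theorem eval_map_algebraMap_ofReal (P : ℝ[X]) (x : ℝ) :
    (P.map (algebraMap ℝ ℂ)).eval (x : ℂ) = P.eval x := by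
  rw [eval_map_algebraMap, ← coe_algebraMap, aeval_algebraMap_apply_eq_algebraMap_eval]

theorem ofReal_sub_ne_zero_of_im_ne_zero (x : ℝ) {z : ℂ} (hz : z.im ≠ 0) : (x : ℂ) - z ≠ 0 :=
  sub_ne_zero.mpr fun h => hz (by simp [← h])

section Moments

variable {μ : Measure ℝ}

theorem integrable_eval_ofReal (hmom : ∀ n : ℕ, Integrable (fun x => |x| ^ n) μ) (P : ℂ[X]) :
    Integrable (fun x : ℝ => P.eval (x : ℂ)) μ := by
  induction P using Polynomial.induction_on' with
  | add P Q hP hQ =>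
    simp only [eval_add]
    exact hP.add hQ
  | monomial n a =>
    simp only [eval_monomial]
    refine ((hmom n).mono' (continuous_ofReal.pow n).aestronglyMeasurable ?_).const_mul a
    filter_upwards with x
    simp [Real.norm_eq_abs]

theorem integrable_eval_div_ofReal_sub (hmom : ∀ n : ℕ, Integrable (fun x => |x| ^ n) μ)
    (P : ℂ[X]) {z : ℂ} (hz : z.im ≠ 0) :
    Integrable (fun x : ℝ => P.eval (x : ℂ) / ((x : ℂ) - z)) μ := by
  have hcont : Continuous fun x : ℝ => P.eval (x : ℂ) / ((x : ℂ) - z) :=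
    (P.continuous.comp continuous_ofReal).div (continuous_ofReal.sub continuous_const)
      fun x => ofReal_sub_ne_zero_of_im_ne_zero x hz
  refine ((integrable_eval_ofReal hmom P).norm.div_const |z.im|).mono'
    hcont.aestronglyMeasurable (Filter.Eventually.of_forall fun x => ?_)
  rw [norm_div]
  gcongr
  simpa using abs_im_le_norm ((x : ℂ) - z)

noncomputable def polynomialIntegral (hmom : ∀ n : ℕ, Integrable (fun x => |x| ^ n) μ) :
    ℂ[X] →ₗ[ℂ] ℂ where
  toFun P := ∫ x, P.eval (x : ℂ) ∂μ
  map_add' P Q := by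
    simp only [eval_add]
    exact integral_add (integrable_eval_ofReal hmom P) (integrable_eval_ofReal hmom Q)
  map_smul' a P := by
    simp only [eval_smul, smul_eq_mul, RingHom.id_apply]
    exact integral_const_mul a _

theorem polynomialIntegral_map_mul_map (hmom : ∀ n : ℕ, Integrable (fun x => |x| ^ n) μ)
    (P Q : ℝ[X]) :
    polynomialIntegral hmom (P.map (algebraMap ℝ ℂ) * Q.map (algebraMap ℝ ℂ)) =
      ((∫ x, P.eval x * Q.eval x ∂μ : ℝ) : ℂ) := by
  rw [← integral_complex_ofReal]
  refine integral_congr_ae (Filter.Eventually.of_forall fun x => ?_)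
  simp only [eval_mul, eval_map_algebraMap_ofReal, ofReal_mul]

theorem eval_mul_integral_sub_eval_mul_integral
    (hmom : ∀ n : ℕ, Integrable (fun x => |x| ^ n) μ) (P Q : ℂ[X]) {z : ℂ}
    (hz : z.im ≠ 0) :
    P.eval z * ∫ x, Q.eval (x : ℂ) / ((x : ℂ) - z) ∂μ -
        Q.eval z * ∫ x, P.eval (x : ℂ) / ((x : ℂ) - z) ∂μ =
      polynomialIntegral hmom (P * (Q /ₘ (X - C z)) - Q * (P /ₘ (X - C z))) := by
  rw [← integral_const_mul, ← integral_const_mul, ← integral_sub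
    ((integrable_eval_div_ofReal_sub hmom Q hz).const_mul _)
    ((integrable_eval_div_ofReal_sub hmom P hz).const_mul _)]
  refine integral_congr_ae (Filter.Eventually.of_forall fun x => ?_)
  simp only [eval_sub, eval_mul]
  exact eval_mul_div_sub_sub_eval_mul_div_sub P Q (ofReal_sub_ne_zero_of_im_ne_zero x hz)

end Moments

section OrthogonalPolynomials

variable {μ : Measure ℝ} {p : ℕ → ℝ[X]} {c : ℕ → ℝ}

theorem polynomialIntegral_map_mul_map_eq_ite (hmom : ∀ n : ℕ, Integrable (fun x => |x| ^ n) μ)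
    (horth : ∀ k m, ∫ x, (p k).eval x * (p m).eval x ∂μ = if k = m then (c k) ^ 2 else 0)
    (k m : ℕ) :
    polynomialIntegral hmom ((p k).map (algebraMap ℝ ℂ) * (p m).map (algebraMap ℝ ℂ)) =
      if k = m then (c k : ℂ) ^ 2 else 0 := by
  rw [polynomialIntegral_map_mul_map, horth]
  split_ifs <;> simp

theorem polynomialIntegral_map_mul_eq_zero (hmom : ∀ n : ℕ, Integrable (fun x => |x| ^ n) μ)
    (hmonic : ∀ k, (p k).Monic) (hdeg : ∀ k, (p k).natDegree = k)
    (horth : ∀ k m, ∫ x, (p k).eval x * (p m).eval x ∂μ = if k = m then (c k) ^ 2 else 0)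
    {k : ℕ} {Q : ℂ[X]} (hQ : Q.degree < k) :
    polynomialIntegral hmom ((p k).map (algebraMap ℝ ℂ) * Q) = 0 :=
  linearMap_eq_zero_of_degree_lt
    ((polynomialIntegral hmom).comp (LinearMap.mulLeft ℂ ((p k).map (algebraMap ℝ ℂ))))
    (fun i => (hmonic i).map _) (fun i => (natDegree_map _).trans (hdeg i))
    (fun i hi => by simpa [hi.ne'] using polynomialIntegral_map_mul_map_eq_ite hmom horth k i) hQ

theorem polynomialIntegral_map_mul_eq_sq (hmom : ∀ n : ℕ, Integrable (fun x => |x| ^ n) μ)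
    (hmonic : ∀ k, (p k).Monic) (hdeg : ∀ k, (p k).natDegree = k)
    (horth : ∀ k m, ∫ x, (p k).eval x * (p m).eval x ∂μ = if k = m then (c k) ^ 2 else 0)
    {k : ℕ} {Q : ℂ[X]} (hQ : Q.Monic) (hQdeg : Q.natDegree = k) :
    polynomialIntegral hmom ((p k).map (algebraMap ℝ ℂ) * Q) = (c k : ℂ) ^ 2 := by
  have := linearMap_eq_of_monic
    ((polynomialIntegral hmom).comp (LinearMap.mulLeft ℂ ((p k).map (algebraMap ℝ ℂ))))
    (fun i => (hmonic i).map _) (fun i => (natDegree_map _).trans (hdeg i))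
    (fun i hi => by simpa [hi.ne'] using polynomialIntegral_map_mul_map_eq_ite hmom horth k i)
    hQ hQdeg
  simpa using this.trans (polynomialIntegral_map_mul_map_eq_ite hmom horth k k)

end OrthogonalPolynomials

theorem fokas_its_kitaev_det_eq_one_general
    (μ : Measure ℝ)
    (hmom : ∀ n : ℕ, Integrable (fun x => |x| ^ n) μ)
    (p : ℕ → Polynomial ℝ) (c : ℕ → ℝ)
    (hmonic : ∀ k, (p k).Monic) (hdeg : ∀ k, (p k).natDegree = k)
    (hc : ∀ k, 0 < c k)
    (horth : ∀ k m, ∫ x, (p k).eval x * (p m).eval x ∂μ =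
      if k = m then (c k) ^ 2 else 0)
    (h : ℕ → ℂ → ℂ)
    (hdef : ∀ (k : ℕ) (ε : ℂ), ε.im ≠ 0 →
      h k ε = (1 / (2 * Real.pi * I)) *
        ∫ x, (((p k).eval x : ℝ) : ℂ) / ((x : ℂ) - ε) ∂μ)
    (n : ℕ) (hn : 1 ≤ n) (z : ℂ) (hz : z.im ≠ 0) :
    Matrix.det
      !![((p n).eval₂ (algebraMap ℝ ℂ) z), h n z;
         (-2 * Real.pi * I / (c (n-1)) ^ 2) * ((p (n-1)).eval₂ (algebraMap ℝ ℂ) z),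
         (-2 * Real.pi * I / (c (n-1)) ^ 2) * h (n-1) z] = 1 := by
  set A : ℕ → ℂ[X] := fun k => (p k).map (algebraMap ℝ ℂ)
  have hA_deg : ∀ k, (A k).natDegree = k := fun k => (natDegree_map _).trans (hdeg k)
  have h_orth : polynomialIntegral hmom (A n * (A (n - 1) /ₘ (X - C z))) = 0 := by
    refine polynomialIntegral_map_mul_eq_zero hmom hmonic hdeg horth ?_
    calc (A (n - 1) /ₘ (X - C z)).degree ≤ (A (n - 1)).degree := degree_divByMonic_le _ _
      _ < n := by
        rw [degree_eq_natDegree ((hmonic _).map _).ne_zero, hA_deg]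
        exact_mod_cast (by omega)
  have h_norm : polynomialIntegral hmom (A (n - 1) * (A n /ₘ (X - C z))) = c (n - 1) ^ 2 :=
    polynomialIntegral_map_mul_eq_sq hmom hmonic hdeg horth
      (((hmonic n).map _).divByMonic_X_sub_C (by rw [hA_deg]; omega) z)
      (by simp [natDegree_divByMonic, hA_deg, monic_X_sub_C])
  have h_cauchy : ∀ k, h k z =
      1 / (2 * Real.pi * I) * ∫ x : ℝ, (A k).eval (x : ℂ) / ((x : ℂ) - z) ∂μ := by
    intro k
    simp only [hdef k z hz, A, eval_map_algebraMap_ofReal]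
  have h_wronskian : (A n).eval z * h (n - 1) z - (A (n - 1)).eval z * h n z =
      1 / (2 * Real.pi * I) * -(c (n - 1) : ℂ) ^ 2 := by
    have := eval_mul_integral_sub_eval_mul_integral hmom (A n) (A (n - 1)) hz
    rw [map_sub, h_orth, h_norm] at this
    rw [h_cauchy, h_cauchy]
    linear_combination 1 / (2 * Real.pi * I) * this
  have hγ : -2 * Real.pi * I / (c (n - 1) : ℂ) ^ 2 *
      (1 / (2 * Real.pi * I) * -(c (n - 1) : ℂ) ^ 2) = 1 := by
    have : (c (n - 1) : ℂ) ≠ 0 := by exact_mod_cast (hc (n - 1)).ne'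
    field_simp
  rw [Matrix.det_fin_two_of, ← eval_map, ← eval_map]
  linear_combination (-2 * Real.pi * I / (c (n - 1) : ℂ) ^ 2) * h_wronskian + hγ

theorem fokas_its_kitaev_det_eq_one
    (μ : Measure ℝ) [IsFiniteMeasure μ]
    (hmom : ∀ n : ℕ, Integrable (fun x => |x| ^ n) μ)
    (p : ℕ → Polynomial ℝ) (c : ℕ → ℝ)
    (hmonic : ∀ k, (p k).Monic) (hdeg : ∀ k, (p k).natDegree = k)
    (hc : ∀ k, 0 < c k)
    (horth : ∀ k m, ∫ x, (p k).eval x * (p m).eval x ∂μ =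
      if k = m then (c k) ^ 2 else 0)
    (h : ℕ → ℂ → ℂ)
    (hdef : ∀ (k : ℕ) (ε : ℂ), ε.im ≠ 0 →
      h k ε = (1 / (2 * Real.pi * I)) *
        ∫ x, (((p k).eval x : ℝ) : ℂ) / ((x : ℂ) - ε) ∂μ)
    (n : ℕ) (hn : 1 ≤ n) (z : ℂ) (hz : z.im ≠ 0) :
    Matrix.det
      !![((p n).eval₂ (algebraMap ℝ ℂ) z), h n z;
         (-2 * Real.pi * I / (c (n-1)) ^ 2) * ((p (n-1)).eval₂ (algebraMap ℝ ℂ) z),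
         (-2 * Real.pi * I / (c (n-1)) ^ 2) * h (n-1) z] = 1 :=
  fokas_its_kitaev_det_eq_one_general μ hmom p c hmonic hdeg hc horth h hdef n hn z hz
end

section
/- For a partition λ = (λ_1 ≥ ... ≥ λ_N ≥ 0) and distinct variables x_1,...,x_N, the Schur polynomial satisfies s_λ(x_1,...,x_N) = det[x_i^{λ_j - j + N}]_{1≤i,j≤N} / Δ(x_1,...,x_N), where Δ(x_1,...,x_N) = ∏_{i<j}(x_j - x_i) is the Vandermonde determinant. -/
open Finset

/-- The complete homogeneous symmetric polynomial `h_k` evaluated at `x`,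
extended by `0` to negative indices. -/
noncomputable def completeHomog (N : ℕ) (x : Fin N → ℝ) : ℤ → ℝ := fun k =>
  if 0 ≤ k then MvPolynomial.eval x (MvPolynomial.hsymm (Fin N) ℝ k.toNat) else 0

/-- The Schur polynomial of the partition `lam`, defined by the Jacobi–Trudi
formula `s_lam = det[h_{lam_i - i + j}]`. -/
noncomputable def schurJT (N : ℕ) (lam : Fin N → ℕ) (x : Fin N → ℝ) : ℝ :=
  Matrix.det (Matrix.of fun i j : Fin N =>
    completeHomog N x ((lam i : ℤ) + (j : ℕ) - (i : ℕ)))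

/-!
Let `C` be the matrix whose `i`-th row lists the coefficients of `∏_{j ≠ i} (X - x_j)`. Extend
`h_n` by `0` to negative `n` and let `S f n = f (n + 1)` be the shift on `ℤ`-indexed sequences.
The recursion `h_{n+1}(s ∪ {a}) = h_{n+1}(s) + x_a h_n(s ∪ {a})` then holds for every `n ∈ ℤ`,
i.e. `(S - x_a) h(s ∪ {a}) = S h(s)`, so `∏_{j ≠ i} (S - x_j)` sends `h` to `S^{N-1} (x_i^n)_n`.
Read off coefficientwise, this factors the generalized Vandermonde matrix as `C` times the
Jacobi–Trudi matrix (transposed, columns reversed). On the other side, `C` times the transposed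
Vandermonde matrix is diagonal with entries `∏_{j ≠ i} (x_i - x_j)`, whose product is
`sign(rev) Δ²`. Taking determinants, the two signs of the reversal cancel.
-/

open Polynomial Matrix

theorem Finset.sym_succ_insert {σ : Type*} [DecidableEq σ] (a : σ) (s : Finset σ) (n : ℕ) :
    (insert a s).sym (n + 1) = ((insert a s).sym n).image (Sym.cons a) ∪ s.sym (n + 1) := by
  ext m
  simp only [mem_union, mem_image, mem_sym_iff, mem_insert]
  constructor
  · intro hm
    by_cases ham : a ∈ m
    · exact .inl ⟨m.erase a ham, fun b hb => hm b (Multiset.mem_of_mem_erase hb),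
        Sym.cons_erase ham⟩
    · exact .inr fun b hb => (hm b hb).resolve_left fun h => ham (h ▸ hb)
  · rintro (⟨m, hm, rfl⟩ | hm) b hb
    · exact (Sym.mem_cons.mp hb).elim .inl (hm b)
    · exact .inr (hm b hb)

namespace SchurBialternant

section CompleteHomog

variable {σ R : Type*} [DecidableEq σ] [CommRing R] (x : σ → R)

noncomputable def completeHomogOn (s : Finset σ) (n : ℤ) : R :=
  if 0 ≤ n then ∑ m ∈ s.sym n.toNat, ((m : Multiset σ).map x).prod else 0

theorem completeHomogOn_natCast (s : Finset σ) (n : ℕ) :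
    completeHomogOn x s n = ∑ m ∈ s.sym n, ((m : Multiset σ).map x).prod := by
  simp [completeHomogOn]

theorem completeHomogOn_of_neg (s : Finset σ) {n : ℤ} (hn : n < 0) :
    completeHomogOn x s n = 0 :=
  if_neg hn.not_ge

theorem completeHomogOn_zero (s : Finset σ) : completeHomogOn x s 0 = 1 := by
  rw [← Nat.cast_zero, completeHomogOn_natCast, sym_zero, sum_singleton]
  rfl

theorem completeHomogOn_singleton (a : σ) (n : ℕ) : completeHomogOn x {a} n = x a ^ n := by
  simp [completeHomogOn_natCast, sym_singleton, Sym.coe_replicate]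

theorem completeHomogOn_insert_succ {a : σ} {s : Finset σ} (ha : a ∉ s) (n : ℕ) :
    completeHomogOn x (insert a s) (n + 1) =
      completeHomogOn x s (n + 1) + x a * completeHomogOn x (insert a s) n := by
  have hdisj : Disjoint (((insert a s).sym n).image (Sym.cons a)) (s.sym (n + 1)) :=
    disjoint_left.mpr fun m hm hm' => by
      obtain ⟨m, -, rfl⟩ := mem_image.mp hm
      exact ha (mem_sym_iff.mp hm' a (Sym.mem_cons_self a m))
  rw [← Nat.cast_add_one, completeHomogOn_natCast, completeHomogOn_natCast,
    completeHomogOn_natCast, sym_succ_insert, sum_union hdisj,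
    sum_image fun _ _ _ _ => (Sym.cons_inj_right a _ _).mp, mul_sum, add_comm]
  simp only [Sym.coe_cons, Multiset.map_cons, Multiset.prod_cons]

end CompleteHomog

section Shift

variable {R : Type*} [CommRing R]

noncomputable def shift : Module.End R (ℤ → R) := LinearMap.funLeft R R (· + 1)

theorem shift_apply (f : ℤ → R) (n : ℤ) : shift f n = f (n + 1) := rfl

theorem shift_pow_apply (k : ℕ) (f : ℤ → R) (n : ℤ) : (shift ^ k) f n = f (n + k) := by
  induction k generalizing n with
  | zero => simp
  | succ k ih =>
    rw [pow_succ', Module.End.mul_apply, shift_apply, ih]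
    congr 1
    push_cast
    ring

theorem aeval_shift_apply {p : R[X]} {d : ℕ} (hp : p.natDegree < d) (f : ℤ → R) (n : ℤ) :
    aeval shift p f n = ∑ k ∈ range d, p.coeff k * f (n + k) := by
  simp [aeval_eq_sum_range' hp, shift_pow_apply]

theorem aeval_shift_apply_shift (p : R[X]) (f : ℤ → R) :
    aeval shift p (shift f) = shift (aeval shift p f) := by
  have h := congrArg (aeval (shift : Module.End R (ℤ → R))) (X_mul (p := p))
  rw [aeval_mul, aeval_mul, aeval_X] at h
  exact (LinearMap.congr_fun h f).symm

variable {σ : Type*} [DecidableEq σ] (x : σ → R)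

theorem shift_sub_completeHomogOn_insert {a : σ} {s : Finset σ} (ha : a ∉ s) :
    shift (completeHomogOn x (insert a s)) - x a • completeHomogOn x (insert a s) =
      shift (completeHomogOn x s) := by
  ext n
  simp only [Pi.sub_apply, Pi.smul_apply, smul_eq_mul, shift_apply]
  rcases lt_or_ge n 0 with hn | hn
  · rw [completeHomogOn_of_neg x _ hn, mul_zero, sub_zero]
    rcases (Int.add_one_le_iff.mpr hn).lt_or_eq with hn' | hn'
    · rw [completeHomogOn_of_neg x _ hn', completeHomogOn_of_neg x _ hn']
    · rw [hn', completeHomogOn_zero, completeHomogOn_zero]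
  · lift n to ℕ using hn
    rw [completeHomogOn_insert_succ x ha]
    ring

theorem aeval_shift_nodal_completeHomogOn {s t : Finset σ} (hst : Disjoint s t) :
    aeval shift (Lagrange.nodal s x) (completeHomogOn x (s ∪ t)) =
      (shift ^ #s) (completeHomogOn x t) := by
  induction s using Finset.induction_on with
  | empty => simp [Lagrange.nodal_empty]
  | insert a s ha ih =>
    obtain ⟨hat, hst⟩ := disjoint_insert_left.mp hst
    have has : a ∉ s ∪ t := by simp [ha, hat]
    rw [Lagrange.nodal_insert_eq_nodal ha, mul_comm, aeval_mul, Module.End.mul_apply, map_sub,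
      aeval_X, aeval_C, LinearMap.sub_apply, Module.algebraMap_end_apply, insert_union,
      shift_sub_completeHomogOn_insert x has, aeval_shift_apply_shift, ih hst,
      card_insert_of_notMem ha, pow_succ', Module.End.mul_apply]

end Shift

section NodalCoeff

variable {R : Type*} [CommRing R] {N : ℕ}

noncomputable def nodalCoeffMatrix (x : Fin N → R) : Matrix (Fin N) (Fin N) R :=
  of fun i k => (Lagrange.nodal (univ.erase i) x).coeff k

theorem natDegree_nodal_erase_lt [Nontrivial R] (x : Fin N → R) (i : Fin N) :
    (Lagrange.nodal (univ.erase i) x).natDegree < N := by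
  rw [Lagrange.natDegree_nodal, card_erase_of_mem (mem_univ i), card_univ, Fintype.card_fin]
  exact Nat.sub_lt i.pos one_pos

theorem nodalCoeffMatrix_mul_vandermonde_transpose [Nontrivial R] (x : Fin N → R) :
    nodalCoeffMatrix x * (vandermonde x)ᵀ = diagonal fun i => ∏ j ∈ univ.erase i, (x i - x j) := by
  ext i l
  simp only [nodalCoeffMatrix, mul_apply, of_apply, transpose_apply, vandermonde_apply]
  rw [Fin.sum_univ_eq_sum_range (fun k => (Lagrange.nodal (univ.erase i) x).coeff k * x l ^ k),
    ← eval_eq_sum_range' (natDegree_nodal_erase_lt x i), Lagrange.eval_nodal]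
  by_cases hil : i = l
  · subst hil
    rw [diagonal_apply_eq]
  · rw [diagonal_apply_ne _ hil]
    exact prod_eq_zero (mem_erase.mpr ⟨Ne.symm hil, mem_univ l⟩) (sub_self _)

theorem det_vandermonde_comp_rev (x : Fin N → R) :
    (vandermonde (x ∘ Fin.rev)).det = ∏ i, ∏ j ∈ Ioi i, (x i - x j) := by
  have hswap : ∏ i, ∏ j ∈ Ioi i, (x (Fin.rev j) - x (Fin.rev i)) =
      ∏ j, ∏ i ∈ Iio j, (x (Fin.rev j) - x (Fin.rev i)) :=
    prod_comm' fun i j => by simp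
  rw [det_vandermonde]
  refine hswap.trans ((Equiv.prod_comp Fin.revPerm _).symm.trans (prod_congr rfl fun j _ => ?_))
  rw [Fin.revPerm_apply, ← Fin.map_revPerm_Ioi, prod_map]
  simp

theorem prod_prod_erase_sub_eq_det_vandermonde_mul (x : Fin N → R) :
    ∏ i, ∏ j ∈ univ.erase i, (x i - x j) =
      (vandermonde x).det * (vandermonde (x ∘ Fin.rev)).det := by
  rw [det_vandermonde, det_vandermonde_comp_rev, ← prod_mul_distrib]
  simp_rw [← compl_singleton, ← prod_mul_distrib]
  rw [← prod_prod_Ioi_mul_eq_prod_prod_off_diag fun i j => x j - x i]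
  exact prod_congr rfl fun i _ => prod_congr rfl fun j _ => mul_comm _ _

theorem det_nodalCoeffMatrix [IsDomain R] {x : Fin N → R} (hx : Function.Injective x) :
    (nodalCoeffMatrix x).det =
      Equiv.Perm.sign (Fin.revPerm : Equiv.Perm (Fin N)) * (vandermonde x).det := by
  have h := congrArg det (nodalCoeffMatrix_mul_vandermonde_transpose x)
  rw [det_mul, det_transpose, det_diagonal, prod_prod_erase_sub_eq_det_vandermonde_mul,
    show vandermonde (x ∘ Fin.rev) = (vandermonde x).submatrix Fin.revPerm id from rfl,
    det_permute] at h
  exact mul_right_cancel₀ (det_vandermonde_ne_zero_iff.mpr hx) (h.trans (mul_comm _ _))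

end NodalCoeff

theorem completeHomog_eq_completeHomogOn_univ (N : ℕ) (x : Fin N → ℝ) :
    completeHomog N x = completeHomogOn x univ := by
  ext n
  unfold completeHomog completeHomogOn
  split_ifs
  · rw [MvPolynomial.hsymm, map_sum, sym_univ]
    refine sum_congr rfl fun m _ => ?_
    simp [map_multiset_prod, Multiset.map_map]
  · rfl

theorem pow_eq_sum_nodalCoeffMatrix_mul_completeHomog {N : ℕ} (x : Fin N → ℝ) (i : Fin N)
    (m : ℕ) : x i ^ m = ∑ k, nodalCoeffMatrix x i k * completeHomog N x (m + k + 1 - N) := by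
  have key := congrFun (aeval_shift_nodal_completeHomogOn x
    (disjoint_singleton_right.mpr (notMem_erase i univ))) (m + 1 - N)
  have hunion : univ.erase i ∪ {i} = univ := by simp
  have hcard : ((#(univ.erase i) : ℕ) : ℤ) = N - 1 := by
    rw [card_erase_of_mem (mem_univ _), card_univ, Fintype.card_fin]
    have := i.pos
    omega
  rw [aeval_shift_apply (natDegree_nodal_erase_lt x i), shift_pow_apply, hunion, hcard,
    show (m : ℤ) + 1 - N + (N - 1) = m by ring, completeHomogOn_singleton,
    ← completeHomog_eq_completeHomogOn_univ] at key
  simp only [nodalCoeffMatrix, of_apply]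
  rw [← key, Fin.sum_univ_eq_sum_range
    (fun k => (Lagrange.nodal (univ.erase i) x).coeff k * completeHomog N x (m + k + 1 - N))]
  refine sum_congr rfl fun k _ => ?_
  ring_nf

theorem of_pow_eq_nodalCoeffMatrix_mul {N : ℕ} (x : Fin N → ℝ) (μ : Fin N → ℕ) :
    of (fun i j => x i ^ μ j) =
      nodalCoeffMatrix x * of fun k j : Fin N => completeHomog N x (μ j + k + 1 - N) := by
  ext i j
  exact pow_eq_sum_nodalCoeffMatrix_mul_completeHomog x i (μ j)

end SchurBialternant

open SchurBialternant

-- Column `j` is column `N - j` of the informal statement: with this order the numerator and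
-- `∏ i < j, (x j - x i) = det (vandermonde x)` list their exponents the same way.
theorem schur_bialternant_formula_general (N : ℕ) (lam : Fin N → ℕ)
    (x : Fin N → ℝ) (hx : Function.Injective x) :
    schurJT N lam x =
      Matrix.det (Matrix.of fun i j : Fin N => x i ^ (lam (Fin.rev j) + (j : ℕ))) /
        (∏ i : Fin N, ∏ j ∈ Finset.Ioi i, (x j - x i)) := by
  have hJT : (of fun k j : Fin N => completeHomog N x ((lam (Fin.rev j) + j : ℕ) + k + 1 - N)) =
      (of fun i j : Fin N =>
        completeHomog N x ((lam i : ℤ) + (j : ℕ) - (i : ℕ)))ᵀ.submatrix id Fin.revPerm := by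
    ext k j
    simp only [of_apply, submatrix_apply, transpose_apply, id_eq, Fin.revPerm_apply]
    have := j.isLt
    rw [Fin.val_rev]
    congr 1
    omega
  have hsign : ((Equiv.Perm.sign (Fin.revPerm : Equiv.Perm (Fin N)) : ℤ) : ℝ) *
      (Equiv.Perm.sign (Fin.revPerm : Equiv.Perm (Fin N)) : ℤ) = 1 := by
    norm_cast
    simp [Int.units_mul_self]
  rw [← det_vandermonde, eq_div_iff (det_vandermonde_ne_zero_iff.mpr hx),
    of_pow_eq_nodalCoeffMatrix_mul x fun j => lam (Fin.rev j) + j, det_mul,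
    det_nodalCoeffMatrix hx, hJT, det_permute', det_transpose, schurJT,
    mul_mul_mul_comm, hsign, one_mul, mul_comm]

/-- Bialternant formula: for a partition `lam_1 ≥ ... ≥ lam_N ≥ 0` and distinct
variables, `s_lam(x) = det[x_i^{lam_j - j + N}] / Δ(x)`, where
`Δ(x) = ∏_{i<j}(x_j - x_i)` is the Vandermonde determinant (the generalized
Vandermonde determinant in the numerator is written with its columns in the
reversed order matching the Vandermonde `det[x_i^{j-1}]` convention). -/
theorem schur_bialternant_formula (N : ℕ) (lam : Fin N → ℕ) (hlam : Antitone lam)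
    (x : Fin N → ℝ) (hx : Function.Injective x) :
    schurJT N lam x =
      Matrix.det (Matrix.of fun i j : Fin N => x i ^ (lam (Fin.rev j) + (j : ℕ))) /
        (∏ i : Fin N, ∏ j ∈ Finset.Ioi i, (x j - x i)) :=
  schur_bialternant_formula_general N lam x hx
end

section
/- Let μ be a finite positive measure on ℝ with all moments finite, π_{N-1} the (N-1)-st monic orthogonal polynomial with norm c_{N-1}, γ_{N-1} = -2πi/c_{N-1}², and h_{N-1} its Cauchy transform. Then for ε ∈ ℂ \ ℝ, γ_{N-1} h_{N-1}(ε) = Z_N^{-1} ∫_{ℝ^N} ∏_{j=1}^N (ε - x_j)^{-1} · Δ²(x_1,...,x_N) ∏_j dμ(x_j), where Z_N = ∫_{ℝ^N} Δ²(x) ∏ dμ(x_j). In other words, the ensemble average of 1/det(ε - H) equals γ_{N-1} h_{N-1}(ε). -/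
/-!
Write `Δ(x) = det [π_i(x_j)]`. Replacing the top row `π_{N-1}(x_j)` by `(ε - x_j)⁻¹` divides this
determinant by `∏ (ε - x_j)`, because the divided difference `(Q(ε) - Q(t)) / (ε - t)` of
`Q = ∏ (t - x_j)` is a monic polynomial of degree `N - 1` whose value at `x_j` is
`Q(ε) / (ε - x_j)`. So the numerator and `Z_N` are both integrals of a product of two
determinants, and Andreief's identity turns each into `N!` times the determinant of a Gram matrix
`(∫ π_a g_b dμ)`. By orthogonality both Gram matrices are upper triangular; their diagonals are
`c_0², …, c_{N-1}²` for `Z_N`, and `c_0², …, c_{N-2}², ∫ π_{N-1}(t) (ε - t)⁻¹ dμ` for the numerator.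
-/

open MeasureTheory Polynomial Complex Finset

/-- Vandermonde product `Δ(x_1,...,x_n) = ∏_{i<j} (x_j - x_i)` of real numbers. -/
def vdmR {n : ℕ} (x : Fin n → ℝ) : ℝ :=
  ∏ i : Fin n, ∏ j ∈ Finset.Ioi i, (x j - x i)

open Matrix Equiv

theorem Matrix.det_of_eval_monic {R : Type*} [CommRing R] {n : ℕ} (q : Fin n → R[X])
    (hdeg : ∀ i, (q i).natDegree = i) (hmonic : ∀ i, (q i).Monic) (x : Fin n → R) :
    (of fun i j => (q i).eval (x j)).det = ∏ i : Fin n, ∏ j ∈ Ioi i, (x j - x i) := by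
  rw [← det_transpose, ← det_vandermonde, det_eval_matrixOfPolynomials_eq_det_vandermonde x q
    hdeg hmonic]
  rfl

namespace Polynomial

variable {R : Type*} [CommRing R]

noncomputable def divDiff (Q : R[X]) (a : R) : R[X] :=
  (Q - C (Q.eval a)) /ₘ (X - C a)

theorem X_sub_C_mul_divDiff (Q : R[X]) (a : R) :
    (X - C a) * Q.divDiff a = Q - C (Q.eval a) :=
  mul_divByMonic_eq_iff_isRoot.mpr (by simp)

theorem natDegree_divDiff [Nontrivial R] (Q : R[X]) (a : R) :
    (Q.divDiff a).natDegree = Q.natDegree - 1 := by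
  rw [divDiff, natDegree_divByMonic _ (monic_X_sub_C a), natDegree_sub_C, natDegree_X_sub_C]

theorem Monic.divDiff {Q : R[X]} (hQ : Q.Monic) (hdeg : 0 < Q.natDegree) (a : R) :
    (Q.divDiff a).Monic := by
  nontriviality R
  have hsub : (Q - C (Q.eval a)).Monic :=
    hQ.sub_of_left (degree_C_le.trans_lt (natDegree_pos_iff_degree_pos.mp hdeg))
  rw [Polynomial.divDiff, Monic, leadingCoeff_divByMonic_of_monic (monic_X_sub_C a),
    hsub.leadingCoeff]
  rw [degree_X_sub_C, degree_eq_natDegree hsub.ne_zero, natDegree_sub_C]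
  exact_mod_cast hdeg

theorem eval_divDiff_of_isRoot {K : Type*} [Field K] {Q : K[X]} {a t : K} (hQ : Q.IsRoot t)
    (ht : a ≠ t) : (Q.divDiff a).eval t = Q.eval a / (a - t) := by
  have h := congrArg (eval t) (X_sub_C_mul_divDiff Q a)
  simp only [eval_mul, eval_sub, eval_X, eval_C, hQ.eq_zero] at h
  rw [eq_div_iff (sub_ne_zero.mpr ht)]
  linear_combination -h

end Polynomial

theorem Matrix.det_updateRow_last_inv_sub {K : Type*} [Field K] {n : ℕ} (q : Fin (n + 1) → K[X])
    (hdeg : ∀ i, (q i).natDegree = i) (hmonic : ∀ i, (q i).Monic) (x : Fin (n + 1) → K)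
    {ε : K} (hε : ∀ j, ε ≠ x j) :
    ((of fun i j => (q i).eval (x j)).updateRow (Fin.last n) fun j => (ε - x j)⁻¹).det =
      (of fun i j => (q i).eval (x j)).det / ∏ j, (ε - x j) := by
  set Q : K[X] := ∏ j, (X - C (x j))
  have hQε : Q.eval ε = ∏ j, (ε - x j) := by simp [Q, eval_prod]
  have hQε_ne : Q.eval ε ≠ 0 := hQε ▸ prod_ne_zero_iff.mpr fun j _ => sub_ne_zero.mpr (hε j)
  have hQdeg : Q.natDegree = n + 1 := by simp [Q]
  set q' := Function.update q (Fin.last n) (Q.divDiff ε)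
  have hq'deg : ∀ i, (q' i).natDegree = i := by
    intro i
    rcases eq_or_ne i (Fin.last n) with rfl | hi
    · simp [q', natDegree_divDiff, hQdeg]
    · simp [q', hi, hdeg]
  have hq'monic : ∀ i, (q' i).Monic := by
    intro i
    rcases eq_or_ne i (Fin.last n) with rfl | hi
    · simpa [q'] using (monic_prod_X_sub_C x univ).divDiff (by simp) ε
    · simpa [q', hi] using hmonic i
  have hrow : (of fun i j => (q' i).eval (x j)) =
      (of fun i j => (q i).eval (x j)).updateRow (Fin.last n)
        (Q.eval ε • fun j => (ε - x j)⁻¹) := by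
    ext i j
    rcases eq_or_ne i (Fin.last n) with rfl | hi
    · have hroot : Q.IsRoot (x j) := by
        simpa [Q, IsRoot, eval_prod, prod_eq_zero_iff] using ⟨j, sub_self _⟩
      simp [q', eval_divDiff_of_isRoot hroot (hε j), div_eq_mul_inv]
    · simp [q', hi]
  have key := (det_of_eval_monic q' hq'deg hq'monic x).trans
    (det_of_eval_monic q hdeg hmonic x).symm
  rw [hrow, det_updateRow_smul] at key
  rw [← hQε, eq_div_iff hQε_ne, mul_comm, key]

theorem Matrix.sum_perm_sum_perm_sign_mul_prod {ι R : Type*} [Fintype ι] [DecidableEq ι]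
    [CommRing R] (M : Matrix ι ι R) :
    ∑ σ : Perm ι, ∑ τ : Perm ι,
        ((Perm.sign σ * Perm.sign τ : ℤ) : R) * ∏ j, M (σ j) (τ j) =
      ((Fintype.card ι).factorial : R) * M.det := by
  have hrow : ∀ σ : Perm ι,
      ∑ τ : Perm ι, ((Perm.sign σ * Perm.sign τ : ℤ) : R) * ∏ j, M (σ j) (τ j) = M.det := by
    intro σ
    have hσ : ((Perm.sign σ : ℤ) : R) * (Perm.sign σ : ℤ) = 1 := by
      rw [← Int.cast_mul, ← Units.val_mul, Int.units_mul_self, Units.val_one, Int.cast_one]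
    calc ∑ τ : Perm ι, ((Perm.sign σ * Perm.sign τ : ℤ) : R) * ∏ j, M (σ j) (τ j)
        = (Perm.sign σ : ℤ) * ((M.submatrix σ id)ᵀ).det := by
          simp only [det_apply, Units.smul_def, zsmul_eq_mul, mul_sum, Int.cast_mul, mul_assoc]
          rfl
      _ = M.det := by rw [det_transpose, det_permute, ← mul_assoc, hσ, one_mul]
  simp_rw [hrow, sum_const, card_univ, Fintype.card_perm, nsmul_eq_mul]

theorem MeasureTheory.integral_det_mul_det {ι α 𝕜 : Type*} [Fintype ι] [DecidableEq ι]
    [RCLike 𝕜] [MeasurableSpace α] (μ : Measure α) [SigmaFinite μ] (f g : ι → α → 𝕜)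
    (hfg : ∀ a b, Integrable (fun t => f a t * g b t) μ) :
    ∫ x : ι → α, (of fun i j => f i (x j)).det * (of fun i j => g i (x j)).det
        ∂(Measure.pi fun _ => μ) =
      ((Fintype.card ι).factorial : 𝕜) * (of fun a b => ∫ t, f a t * g b t ∂μ).det := by
  have hexpand : ∀ x : ι → α,
      (of fun i j => f i (x j)).det * (of fun i j => g i (x j)).det =
        ∑ σ : Perm ι, ∑ τ : Perm ι, ((Perm.sign σ * Perm.sign τ : ℤ) : 𝕜) *
          ∏ j, (f (σ j) (x j) * g (τ j) (x j)) := by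
    intro x
    simp only [det_apply, sum_mul_sum, Units.smul_def, zsmul_eq_mul, prod_mul_distrib,
      Int.cast_mul, of_apply]
    refine sum_congr rfl fun σ _ => sum_congr rfl fun τ _ => by ring
  have hint : ∀ σ τ : Perm ι, Integrable (fun x : ι → α =>
      ∏ j, (f (σ j) (x j) * g (τ j) (x j))) (Measure.pi fun _ => μ) :=
    fun σ τ => Integrable.fintype_prod (f := fun j t => f (σ j) t * g (τ j) t) fun j => hfg _ _
  simp_rw [hexpand]
  rw [← sum_perm_sum_perm_sign_mul_prod,
    integral_finsetSum _ fun σ _ => integrable_finsetSum _ fun τ _ => (hint σ τ).const_mul _]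
  refine sum_congr rfl fun σ _ => ?_
  rw [integral_finsetSum _ fun τ _ => (hint σ τ).const_mul _]
  refine sum_congr rfl fun τ _ => ?_
  rw [integral_const_mul, integral_fintype_prod_eq_prod (fun j t => f (σ j) t * g (τ j) t)]
  rfl

theorem MeasureTheory.Integrable.polynomial_eval {μ : Measure ℝ}
    (hmom : ∀ n : ℕ, Integrable (fun x => |x| ^ n) μ) (q : ℝ[X]) :
    Integrable (fun x => q.eval x) μ := by
  simp_rw [eval_eq_sum_range]
  refine integrable_finsetSum _ fun i _ => Integrable.const_mul ?_ _
  exact (hmom i).mono' (by fun_prop) (.of_forall fun x => by simp)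

theorem vdmR_eq_det {p : ℕ → ℝ[X]} (hmonic : ∀ k, (p k).Monic) (hdeg : ∀ k, (p k).natDegree = k)
    {n : ℕ} (x : Fin n → ℝ) :
    vdmR x = (of fun i j : Fin n => (p i).eval (x j)).det :=
  (det_of_eval_monic (fun i => p i) (fun i => hdeg i) (fun i => hmonic i) x).symm

@[simp]
theorem Polynomial.eval_map_ofRealHom (q : ℝ[X]) (x : ℝ) :
    (q.map ofRealHom).eval (x : ℂ) = ((q.eval x : ℝ) : ℂ) :=
  eval_map_apply ofRealHom x

theorem ofReal_vdmR_eq_det {p : ℕ → ℝ[X]} (hmonic : ∀ k, (p k).Monic)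
    (hdeg : ∀ k, (p k).natDegree = k) {n : ℕ} (x : Fin n → ℝ) :
    (vdmR x : ℂ) = (of fun i j : Fin n => (((p i).eval (x j) : ℝ) : ℂ)).det := by
  rw [vdmR_eq_det hmonic hdeg, ← ofRealHom_eq_coe, RingHom.map_det]
  rfl

theorem det_updateRow_inv_sub_ofReal {p : ℕ → ℝ[X]} (hmonic : ∀ k, (p k).Monic)
    (hdeg : ∀ k, (p k).natDegree = k) {n : ℕ} (x : Fin (n + 1) → ℝ) {ε : ℂ} (hε : ε.im ≠ 0) :
    ((of fun i j : Fin (n + 1) => (((p i).eval (x j) : ℝ) : ℂ)).updateRow (Fin.last n)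
        fun j => (ε - x j)⁻¹).det = vdmR x / ∏ j, (ε - x j) := by
  have hrow := det_updateRow_last_inv_sub (fun i : Fin (n + 1) => (p i).map ofRealHom)
    (fun i => by rw [(hmonic i).natDegree_map, hdeg]) (fun i => (hmonic i).map _)
    (fun j => (x j : ℂ)) fun j h => hε (by simpa using congrArg im h)
  simpa [← ofReal_vdmR_eq_det hmonic hdeg] using hrow

theorem integral_vdmR_sq {μ : Measure ℝ} [IsFiniteMeasure μ]
    (hmom : ∀ n : ℕ, Integrable (fun x => |x| ^ n) μ) {p : ℕ → ℝ[X]} {c : ℕ → ℝ}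
    (hmonic : ∀ k, (p k).Monic) (hdeg : ∀ k, (p k).natDegree = k)
    (horth : ∀ k m, ∫ x, (p k).eval x * (p m).eval x ∂μ = if k = m then (c k) ^ 2 else 0)
    (N : ℕ) :
    ∫ x : Fin N → ℝ, vdmR x ^ 2 ∂(Measure.pi fun _ => μ) =
      N.factorial * ∏ k ∈ range N, c k ^ 2 := by
  simp_rw [sq (vdmR _), vdmR_eq_det hmonic hdeg]
  rw [integral_det_mul_det μ (fun (a : Fin N) t => (p a).eval t) (fun a t => (p a).eval t)
    fun a b => by
    simpa using Integrable.polynomial_eval hmom (p a * p b)]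
  have hgram : (of fun a b : Fin N => ∫ t, (p a).eval t * (p b).eval t ∂μ) =
      diagonal fun a : Fin N => c a ^ 2 := by
    ext a b
    simp [horth, diagonal_apply, Fin.val_inj, sq]
  rw [hgram, det_diagonal, Fintype.card_fin, Fin.prod_univ_eq_prod_range (fun k => c k ^ 2) N]

theorem Complex.norm_inv_sub_ofReal_le {ε : ℂ} (hε : ε.im ≠ 0) (t : ℝ) :
    ‖(ε - t)⁻¹‖ ≤ |ε.im|⁻¹ := by
  rw [norm_inv]
  exact inv_anti₀ (abs_pos.mpr hε) (by simpa using abs_im_le_norm (ε - t))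

theorem MeasureTheory.Integrable.mul_inv_sub_ofReal {μ : Measure ℝ} {f : ℝ → ℂ}
    (hf : Integrable f μ) {ε : ℂ} (hε : ε.im ≠ 0) :
    Integrable (fun t => f t * (ε - t)⁻¹) μ :=
  hf.mul_bdd (by fun_prop) (.of_forall (Complex.norm_inv_sub_ofReal_le hε))

theorem integral_inv_prod_sub_mul_vdmR_sq {μ : Measure ℝ} [IsFiniteMeasure μ]
    (hmom : ∀ n : ℕ, Integrable (fun x => |x| ^ n) μ) {p : ℕ → ℝ[X]} {c : ℕ → ℝ}
    (hmonic : ∀ k, (p k).Monic) (hdeg : ∀ k, (p k).natDegree = k)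
    (horth : ∀ k m, ∫ x, (p k).eval x * (p m).eval x ∂μ = if k = m then (c k) ^ 2 else 0)
    (n : ℕ) {ε : ℂ} (hε : ε.im ≠ 0) :
    ∫ x : Fin (n + 1) → ℝ, (∏ j, (ε - (x j : ℂ)))⁻¹ * ((vdmR x ^ 2 : ℝ) : ℂ)
        ∂(Measure.pi fun _ => μ) =
      (n + 1).factorial * ((∏ k ∈ range n, c k ^ 2 : ℝ) : ℂ) *
        ∫ t, (((p n).eval t : ℝ) : ℂ) * (ε - t)⁻¹ ∂μ := by
  set f : Fin (n + 1) → ℝ → ℂ := fun a t => (((p a).eval t : ℝ) : ℂ)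
  set g : Fin (n + 1) → ℝ → ℂ := fun b t => if b = Fin.last n then (ε - t)⁻¹ else f b t
  have hf_det : ∀ x : Fin (n + 1) → ℝ, (of fun i j => f i (x j)).det = vdmR x :=
    fun x => (ofReal_vdmR_eq_det hmonic hdeg x).symm
  have hg_det : ∀ x : Fin (n + 1) → ℝ,
      (of fun i j => g i (x j)).det = vdmR x / ∏ j, (ε - x j) := by
    intro x
    have hrow : (of fun i j => g i (x j)) =
        (of fun i j => f i (x j)).updateRow (Fin.last n) fun j => (ε - x j)⁻¹ := by
      ext i j
      rcases eq_or_ne i (Fin.last n) with rfl | hi <;> simp [g, *]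
    rw [hrow, det_updateRow_inv_sub_ofReal hmonic hdeg x hε]
  have hfg : ∀ a b, Integrable (fun t => f a t * g b t) μ := by
    intro a b
    rcases eq_or_ne b (Fin.last n) with rfl | hb
    · simpa [g] using
        ((Integrable.polynomial_eval hmom (p a)).ofReal (𝕜 := ℂ)).mul_inv_sub_ofReal hε
    · simpa [f, g, hb] using (Integrable.polynomial_eval hmom (p a * p b)).ofReal (𝕜 := ℂ)
  have hgram : ∀ a b, b ≠ Fin.last n →
      ∫ t, f a t * g b t ∂μ = ((if a = b then c a ^ 2 else 0 : ℝ) : ℂ) := by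
    intro a b hb
    simp only [f, g, hb, if_false, ← ofReal_mul, integral_complex_ofReal, horth, Fin.val_inj]
  have hupper : (of fun a b => ∫ t, f a t * g b t ∂μ).IsUpperTriangular := by
    intro a b hba
    simp [hgram a b (Fin.ne_last_of_lt hba), show a ≠ b from hba.ne']
  have hintegrand : ∀ x : Fin (n + 1) → ℝ, (∏ j, (ε - (x j : ℂ)))⁻¹ * ((vdmR x ^ 2 : ℝ) : ℂ) =
      (of fun i j => f i (x j)).det * (of fun i j => g i (x j)).det := by
    intro x
    rw [hf_det, hg_det]
    push_cast
    ring
  simp_rw [hintegrand]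
  rw [integral_det_mul_det μ f g hfg, det_of_isUpperTriangular hupper, Fin.prod_univ_castSucc,
    ← Fin.prod_univ_eq_prod_range, mul_assoc, Fintype.card_fin, ofReal_prod]
  congr 2
  · refine prod_congr rfl fun k _ => ?_
    rw [of_apply, hgram _ _ (Fin.castSucc_ne_last k), if_pos rfl, Fin.val_castSucc]
  · simp [f, g]

/-- The ensemble average of `1/det(ε - H)` over the `β = 2` invariant ensemble
equals `γ_{N-1} h_{N-1}(ε)`, where `h_{N-1}` is the Cauchy transform of the monic
orthogonal polynomial `π_{N-1}` and `γ_{N-1} = -2πi/c_{N-1}²`. -/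
theorem average_inverse_char_poly
    (μ : Measure ℝ) [IsFiniteMeasure μ]
    (hmom : ∀ n : ℕ, Integrable (fun x => |x| ^ n) μ)
    (p : ℕ → Polynomial ℝ) (c : ℕ → ℝ)
    (hmonic : ∀ k, (p k).Monic) (hdeg : ∀ k, (p k).natDegree = k)
    (hc : ∀ k, 0 < c k)
    (horth : ∀ k m, ∫ x, (p k).eval x * (p m).eval x ∂μ =
      if k = m then (c k) ^ 2 else 0)
    (N : ℕ) (hN : 1 ≤ N) (ε : ℂ) (hε : ε.im ≠ 0) :
    (-2 * Real.pi * I / (c (N - 1)) ^ 2) *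
        ((1 / (2 * Real.pi * I)) *
          ∫ x, (((p (N - 1)).eval x : ℝ) : ℂ) / ((x : ℂ) - ε) ∂μ) =
      (∫ x : Fin N → ℝ,
          (∏ j : Fin N, (ε - (x j : ℂ)))⁻¹ * ((vdmR x ^ 2 : ℝ) : ℂ)
            ∂(Measure.pi fun _ => μ)) /
        ((∫ x : Fin N → ℝ, vdmR x ^ 2 ∂(Measure.pi fun _ => μ) : ℝ) : ℂ) := by
  obtain ⟨n, rfl⟩ : ∃ n, N = n + 1 := ⟨N - 1, by omega⟩
  have hcauchy : ∫ t, (((p n).eval t : ℝ) : ℂ) / ((t : ℂ) - ε) ∂μ =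
      -∫ t, (((p n).eval t : ℝ) : ℂ) * (ε - t)⁻¹ ∂μ := by
    rw [← integral_neg]
    congr 1 with t
    rw [div_eq_mul_inv, ← neg_sub ε, inv_neg, mul_neg]
  have hc_ne : ∀ k, ((c k : ℝ) : ℂ) ≠ 0 := fun k => ofReal_ne_zero.mpr (hc k).ne'
  have hprod_ne : ∏ k ∈ range n, ((c k : ℝ) : ℂ) ^ 2 ≠ 0 :=
    prod_ne_zero_iff.mpr fun k _ => pow_ne_zero 2 (hc_ne k)
  rw [Nat.add_sub_cancel, hcauchy, integral_inv_prod_sub_mul_vdmR_sq hmom hmonic hdeg horth n hε,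
    integral_vdmR_sq hmom hmonic hdeg horth, prod_range_succ]
  push_cast
  field_simp [hc_ne n, Real.pi_ne_zero, (n + 1).factorial_ne_zero]
end
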